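/- With the same setting as before (Aᵢ : X → Yᵢ bounded linear, B = (1/n)Σ Aᵢ*Aᵢ, A the stacked operator, i uniform on {1,…,n}), for any deterministic bounded linear operator R : X → X and any x ∈ X, E[‖R(B - Aᵢ*Aᵢ)x‖²] ≤ ‖R B^{1/2}‖²·‖Ax‖². -/

import Mathlib

/-!
With `yᵢ = R Aᵢ* Aᵢ x`, the mean of the `yᵢ` is `R B x`, so the left-hand side is the variance
of `yᵢ`, which is at most its second moment `n⁻¹ Σᵢ ‖yᵢ‖²`. Each term is controlled by the
C*-identity: `‖R Aᵢ*‖² = ‖R Aᵢ* Aᵢ R*‖ ≤ ‖R (n B) R*‖ = n ‖R B^{1/2}‖²`, since `Aᵢ* Aᵢ ≤ n B`.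
-/

open ContinuousLinearMap Finset
open scoped InnerProductSpace

theorem sum_norm_sub_sq_le_sum_norm_sq {𝕜 E ι : Type*} [RCLike 𝕜] [NormedAddCommGroup E]
    [InnerProductSpace 𝕜 E] (s : Finset ι) (y : ι → E) {m : E} (hm : ∑ i ∈ s, y i = #s • m) :
    ∑ i ∈ s, ‖m - y i‖ ^ 2 ≤ ∑ i ∈ s, ‖y i‖ ^ 2 := by
  have hinner : RCLike.re ⟪m, ∑ i ∈ s, y i⟫_𝕜 = #s * ‖m‖ ^ 2 := by
    rw [hm, ← Nat.cast_smul_eq_nsmul 𝕜, inner_smul_right, inner_self_eq_norm_sq_to_K]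
    norm_cast
  calc ∑ i ∈ s, ‖m - y i‖ ^ 2
      = #s * ‖m‖ ^ 2 - 2 * RCLike.re ⟪m, ∑ i ∈ s, y i⟫_𝕜 + ∑ i ∈ s, ‖y i‖ ^ 2 := by
        simp only [norm_sub_sq (𝕜 := 𝕜), sum_add_distrib, sum_sub_distrib, sum_const, nsmul_eq_mul,
          inner_sum, map_sum, mul_sum]
    _ ≤ ∑ i ∈ s, ‖y i‖ ^ 2 := by
        rw [hinner]; nlinarith [sq_nonneg ‖m‖, (#s).cast_nonneg (α := ℝ)]

section

variable {E : Type*} [NormedAddCommGroup E] [InnerProductSpace ℂ E] [CompleteSpace E]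

theorem norm_comp_sq_le_of_comp_adjoint_le {F : Type*} [NormedAddCommGroup F]
    [InnerProductSpace ℂ F] [CompleteSpace F] {T : F →L[ℂ] E} {C : E →L[ℂ] E} {c : ℝ}
    (hc : 0 ≤ c) (h : T ∘L adjoint T ≤ c • (C * star C)) (R : E →L[ℂ] E) :
    ‖R ∘L T‖ ^ 2 ≤ c * ‖R * C‖ ^ 2 := by
  have hnonneg : 0 ≤ (R ∘L T) ∘L adjoint (R ∘L T) :=
    (nonneg_iff_isPositive _).mpr (isPositive_self_comp_adjoint _)
  have hconj : (R ∘L T) ∘L adjoint (R ∘L T) = R * (T ∘L adjoint T) * star R := by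
    rw [adjoint_comp, star_eq_adjoint]; rfl
  have hcstar := norm_adjoint_comp_self (adjoint (R ∘L T))
  rw [adjoint_adjoint, LinearIsometryEquiv.norm_map] at hcstar
  calc ‖R ∘L T‖ ^ 2 = ‖(R ∘L T) ∘L adjoint (R ∘L T)‖ := by rw [hcstar, sq]
    _ ≤ ‖R * (c • (C * star C)) * star R‖ := by
        rw [hconj] at hnonneg ⊢
        exact CStarAlgebra.norm_le_norm_of_nonneg_of_le hnonneg
          (star_right_conjugate_le_conjugate h R)
    _ = c * ‖R * C‖ ^ 2 := by
        rw [mul_smul_comm, smul_mul_assoc, norm_smul, ← mul_assoc, mul_assoc (R * C), ← star_mul,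
          CStarRing.norm_self_mul_star, Real.norm_of_nonneg hc, sq]

theorem adjoint_comp_self_le_sum {ι : Type*} {G : ι → Type*} [∀ i, NormedAddCommGroup (G i)]
    [∀ i, InnerProductSpace ℂ (G i)] [∀ i, CompleteSpace (G i)] (A : ∀ i, E →L[ℂ] G i)
    {s : Finset ι} {i : ι} (hi : i ∈ s) :
    adjoint (A i) ∘L A i ≤ ∑ j ∈ s, adjoint (A j) ∘L A j :=
  single_le_sum (fun j _ ↦ (nonneg_iff_isPositive _).mpr (isPositive_adjoint_comp_self (A j))) hi

end

open ContinuousLinearMap in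
theorem stmt6 {E : Type*} [NormedAddCommGroup E] [InnerProductSpace ℂ E] [CompleteSpace E]
    {n : ℕ} (hn : 0 < n) {F : Fin n → Type*} [∀ i, NormedAddCommGroup (F i)]
    [∀ i, InnerProductSpace ℂ (F i)] [∀ i, CompleteSpace (F i)]
    (A : ∀ i, E →L[ℂ] F i)
    (B : E →L[ℂ] E) (hB : B = (n : ℝ)⁻¹ • ∑ i, (adjoint (A i)).comp (A i))
    (R : E →L[ℂ] E) (x : E) :
    (n : ℝ)⁻¹ * ∑ i, ‖R ((B - (adjoint (A i)).comp (A i)) x)‖ ^ 2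
      ≤ ‖R * CFC.sqrt B‖ ^ 2 * ∑ i, ‖A i x‖ ^ 2 := by
  have hn₀ : (n : ℝ) ≠ 0 := by positivity
  have hsum : ∑ i, adjoint (A i) ∘L A i = (n : ℝ) • B := by rw [hB, smul_inv_smul₀ hn₀]
  have hB₀ : 0 ≤ B := by
    rw [hB]
    exact smul_nonneg (by positivity) (sum_nonneg fun i _ ↦
      (nonneg_iff_isPositive _).mpr (isPositive_adjoint_comp_self (A i)))
  have hsqrt : CFC.sqrt B * star (CFC.sqrt B) = B := by
    rw [(CFC.sqrt_nonneg B).isSelfAdjoint.star_eq, CFC.sqrt_mul_sqrt_self B]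
  have hRA (i : Fin n) : ‖R ∘L adjoint (A i)‖ ^ 2 ≤ n * ‖R * CFC.sqrt B‖ ^ 2 := by
    refine norm_comp_sq_le_of_comp_adjoint_le (by positivity) ?_ R
    rw [adjoint_adjoint, hsqrt, ← hsum]
    exact adjoint_comp_self_le_sum A (mem_univ i)
  have hmean : ∑ i, R (adjoint (A i) (A i x)) = #(univ : Finset (Fin n)) • R (B x) := by
    rw [card_univ, Fintype.card_fin, ← Nat.cast_smul_eq_nsmul ℝ, ← map_smul_of_tower,
      ← smul_apply, ← hsum, _root_.sum_apply, map_sum]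
    rfl
  calc (n : ℝ)⁻¹ * ∑ i, ‖R ((B - (adjoint (A i)).comp (A i)) x)‖ ^ 2
      = (n : ℝ)⁻¹ * ∑ i, ‖R (B x) - R (adjoint (A i) (A i x))‖ ^ 2 := by simp
    _ ≤ (n : ℝ)⁻¹ * ∑ i, ‖(R ∘L adjoint (A i)) (A i x)‖ ^ 2 := by
        gcongr (n : ℝ)⁻¹ * ?_
        exact sum_norm_sub_sq_le_sum_norm_sq (𝕜 := ℂ) _ _ hmean
    _ ≤ (n : ℝ)⁻¹ * ∑ i, n * ‖R * CFC.sqrt B‖ ^ 2 * ‖A i x‖ ^ 2 := by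
        gcongr with i
        calc ‖(R ∘L adjoint (A i)) (A i x)‖ ^ 2 ≤ (‖R ∘L adjoint (A i)‖ * ‖A i x‖) ^ 2 := by
              gcongr; exact le_opNorm _ _
          _ ≤ n * ‖R * CFC.sqrt B‖ ^ 2 * ‖A i x‖ ^ 2 := by
              rw [mul_pow]; gcongr; exact hRA i
    _ = ‖R * CFC.sqrt B‖ ^ 2 * ∑ i, ‖A i x‖ ^ 2 := by
        rw [← mul_sum, mul_assoc, inv_mul_cancel_left₀ hn₀]
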